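/- Local-to-virtual-group deviation bound: under β-smoothness of F^{k,i} and finite gradient divergence δ^{k,i}, with both sequences started equal at time (r−1)τ₁ (w'_{(r−1)τ₁} = v_{(r−1)τ₁}) and evolving by gradient descent on F^{k,i} and F^k respectively, ‖w'_t − v_t‖ ≤ (δ^{k,i}/β)((ηβ + 1)^{t − (r−1)τ₁} − 1) for all t ≥ (r−1)τ₁. -/
import Mathlib


/-- Local-to-virtual-group deviation bound: sequences started equal at
`t0 = (r-1)τ₁` and following gradient descent on `F^{k,i}` and `F^k`
respectively satisfy
`‖w'_t - v_t‖ ≤ (δ^{k,i}/β)((ηβ+1)^(t - t0) - 1)` for all `t ≥ t0`. -/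
theorem stmt_13 {d : ℕ} (Fki Fk : EuclideanSpace ℝ (Fin d) → ℝ)
    (β η : ℝ) (hβ : 0 < β) (hη : 0 < η)
    (hdiff1 : ∀ x, DifferentiableAt ℝ Fki x)
    (hdiff2 : ∀ x, DifferentiableAt ℝ Fk x)
    (hsmooth : ∀ x y, ‖gradient Fki x - gradient Fki y‖ ≤ β * ‖x - y‖)
    (hbdd : BddAbove (Set.range fun w => ‖gradient Fki w - gradient Fk w‖))
    (r τ₁ : ℕ)
    (w' v : ℕ → EuclideanSpace ℝ (Fin d))
    (hinit : w' ((r - 1) * τ₁) = v ((r - 1) * τ₁))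
    (hw : ∀ t, (r - 1) * τ₁ < t → w' t = w' (t - 1) - η • gradient Fki (w' (t - 1)))
    (hv : ∀ t, (r - 1) * τ₁ < t → v t = v (t - 1) - η • gradient Fk (v (t - 1))) :
    ∀ t, (r - 1) * τ₁ ≤ t →
      ‖w' t - v t‖ ≤ (⨆ w, ‖gradient Fki w - gradient Fk w‖) / β *
        ((η * β + 1) ^ (t - (r - 1) * τ₁) - 1) := by
  set t0 := (r - 1) * τ₁ with ht0
  set δ := ⨆ w, ‖gradient Fki w - gradient Fk w‖ with hδdef
  have hδle : ∀ w, ‖gradient Fki w - gradient Fk w‖ ≤ δ := fun w =>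
    le_ciSup hbdd w
  have hδ0 : 0 ≤ δ := le_trans (norm_nonneg _) (hδle 0)
  intro t ht
  induction t, ht using Nat.le_induction with
  | base => simp [hinit]
  | succ t ht ih =>
    have hw1 := hw (t + 1) (by omega)
    have hv1 := hv (t + 1) (by omega)
    simp only [Nat.add_sub_cancel] at hw1 hv1
    have key : w' (t + 1) - v (t + 1) = (w' t - v t) -
        η • ((gradient Fki (w' t) - gradient Fki (v t)) +
          (gradient Fki (v t) - gradient Fk (v t))) := by
      rw [hw1, hv1]; module
    have hnorm : ‖w' (t + 1) - v (t + 1)‖ ≤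
        (1 + η * β) * ‖w' t - v t‖ + η * δ := by
      rw [key]
      have h1 : ‖(w' t - v t) -
          η • ((gradient Fki (w' t) - gradient Fki (v t)) +
            (gradient Fki (v t) - gradient Fk (v t)))‖ ≤
          ‖w' t - v t‖ + η * (‖gradient Fki (w' t) - gradient Fki (v t)‖ +
            ‖gradient Fki (v t) - gradient Fk (v t)‖) := by
        calc _ ≤ ‖w' t - v t‖ + ‖η • ((gradient Fki (w' t) - gradient Fki (v t)) +
              (gradient Fki (v t) - gradient Fk (v t)))‖ := norm_sub_le _ _
          _ ≤ _ := by
            rw [norm_smul, Real.norm_eq_abs, abs_of_pos hη]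
            gcongr
            exact norm_add_le _ _
      have h2 := hsmooth (w' t) (v t)
      have h3 := hδle (v t)
      nlinarith [norm_nonneg (w' t - v t)]
    have hexp : t + 1 - t0 = (t - t0) + 1 := by omega
    rw [hexp, pow_succ]
    set P := (η * β + 1) ^ (t - t0) with hP
    have hβδ : δ / β * (η * β) = η * δ := by field_simp
    have hx : (0:ℝ) ≤ 1 + η * β := by positivity
    nlinarith [mul_le_mul_of_nonneg_left ih hx]
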